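/- Any eigenvector φ of the transfer operator L with eigenvalue ξ of modulus |ξ| > 1 vanishes identically on I ∖ K_f, the complement of the core of f. -/

import Mathlib

open Set

/-- A piecewise monotone map of degree `d` on `I = [0,1]`:
a continuous map with `f(∂I) ⊆ ∂I` and turning points `c 0 = 0 < c 1 < ... < c d = 1`
such that `f` is strictly monotone on each `[c k, c (k+1)]`, with alternating monotonicity. -/
structure PwMono (d : ℕ) : Type where
  f : ℝ → ℝ
  c : ℕ → ℝ
  pos : 0 < d
  cont : ContinuousOn f (Set.Icc 0 1)
  maps : Set.MapsTo f (Set.Icc 0 1) (Set.Icc 0 1)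
  bdry0 : f 0 = 0 ∨ f 0 = 1
  bdry1 : f 1 = 0 ∨ f 1 = 1
  c0 : c 0 = 0
  cd : c d = 1
  cmono : StrictMonoOn c (Set.Iic d)
  piece : ∀ k < d, StrictMonoOn f (Set.Icc (c k) (c (k+1))) ∨
    StrictAntiOn f (Set.Icc (c k) (c (k+1)))
  alt : ∀ k, k + 1 < d →
    (StrictMonoOn f (Set.Icc (c k) (c (k+1))) ↔ ¬ StrictMonoOn f (Set.Icc (c (k+1)) (c (k+2))))

/-- The pullback operator on metrics: `(f*m)(J) = ∑ₖ m (f (J ∩ Iₖ))`. -/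
noncomputable def pullback (f : ℝ → ℝ) (d : ℕ) (c : ℕ → ℝ) (m : Set ℝ → ℝ) : Set ℝ → ℝ :=
  fun J => ∑ k ∈ Finset.range d, m (f '' (J ∩ Set.Icc (c k) (c (k+1))))

/-- The metric induced by Lebesgue measure. -/
noncomputable def leb : Set ℝ → ℝ := fun S => (MeasureTheory.volume S).toReal

/-- A metric on `I`: a nonnegative functional on arcs, additive on adjacent arcs. -/
def IsArcMetric (m : Set ℝ → ℝ) : Prop :=
  (∀ x y : ℝ, 0 ≤ m (Set.Icc x y)) ∧
  (∀ x y z : ℝ, x ≤ y → y ≤ z → m (Set.Icc x z) = m (Set.Icc x y) + m (Set.Icc y z))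

/-- The transfer operator with constant potential 1 acting on complex-valued functions. -/
noncomputable def transferOpC (f : ℝ → ℝ) (d : ℕ) (c : ℕ → ℝ) (finv : ℕ → ℝ → ℝ)
    (φ : ℝ → ℂ) : ℝ → ℂ :=
  fun x => ∑ k ∈ Finset.range d,
    φ (finv k x) * ((f '' Set.Icc (c k) (c (k + 1))).indicator (fun _ => (1 : ℝ)) x : ℝ)

/-- The postcritical set of a piecewise monotone map: the closure of the union of the
forward orbits of the interior turning points. -/
def postcritical (d : ℕ) (F : PwMono d) : Set ℝ :=
  closure (⋃ i ∈ Set.Ioo 0 d, ⋃ n ∈ Set.Ici 1, {F.f^[n] (F.c i)})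

/-- The core: the convex hull of the postcritical set. -/
noncomputable def core (d : ℕ) (F : PwMono d) : Set ℝ :=
  Set.Icc (sInf (postcritical d F)) (sSup (postcritical d F))

/-! Outside the core `K = [a, b]` a point has live preimages (preimages that have preimages
themselves) in at most one lap: the interior laps map into `K`, and of two preimages in the two
end laps one lies outside `f(I)`. Points without preimages are zeros of every eigenfunction with
`ξ ≠ 0`, and `I ∖ K` is closed under preimages since `f(K) ⊆ K`. Hence `|ξ| sup |φ| ≤ sup |φ|`
on `I ∖ K`, so `φ = 0` there. For `d = 1` the same argument runs on all of `I`. -/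

lemma norm_sum_le_of_ne_zero_unique {ι E : Type*} [SeminormedAddCommGroup E] {s : Finset ι}
    {g : ι → E} {M : ℝ} (hM : 0 ≤ M) (hg : ∀ i ∈ s, ‖g i‖ ≤ M)
    (huniq : ∀ i ∈ s, ∀ j ∈ s, g i ≠ 0 → g j ≠ 0 → i = j) :
    ‖∑ i ∈ s, g i‖ ≤ M := by
  by_cases h : ∃ i ∈ s, g i ≠ 0
  · obtain ⟨i, hi, hgi⟩ := h
    rw [Finset.sum_eq_single_of_mem i hi fun j hj hji =>
      by_contra fun hgj => hji (huniq j hj i hi hgj hgi)]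
    exact hg i hi
  · push Not at h
    rw [Finset.sum_eq_zero h, norm_zero]
    exact hM

lemma eqOn_zero_of_bound_improves {α E : Type*} [NormedAddCommGroup E] {S : Set α}
    {φ : α → E} {C r : ℝ} (hr : 1 < r) (hC : ∀ y ∈ S, ‖φ y‖ ≤ C)
    (himp : ∀ M, (∀ y ∈ S, ‖φ y‖ ≤ M) → ∀ y ∈ S, r * ‖φ y‖ ≤ M) :
    ∀ y ∈ S, φ y = 0 := by
  intro y hy
  have hbdd : BddAbove ((‖φ ·‖) '' S) := ⟨C, forall_mem_image.2 hC⟩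
  set M := sSup ((‖φ ·‖) '' S)
  have hM : ∀ z ∈ S, ‖φ z‖ ≤ M := fun z hz => le_csSup hbdd (mem_image_of_mem _ hz)
  have hMr : M ≤ M / r := csSup_le ⟨_, mem_image_of_mem _ hy⟩ <| forall_mem_image.2
    fun z hz => (le_div_iff₀' (by linarith)).2 (himp M hM z hz)
  have hM0 : M ≤ 0 := by
    rw [le_div_iff₀ (by linarith)] at hMr
    nlinarith [(norm_nonneg _).trans (hM y hy)]
  exact norm_le_zero_iff.1 ((hM y hy).trans hM0)

namespace PwMono

variable {d : ℕ} (F : PwMono d)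

abbrev lap (k : ℕ) : Set ℝ := Icc (F.c k) (F.c (k + 1))

lemma c_le_c {j k : ℕ} (hjk : j ≤ k) (hk : k ≤ d) : F.c j ≤ F.c k :=
  F.cmono.monotoneOn (mem_Iic.2 (hjk.trans hk)) (mem_Iic.2 hk) hjk

lemma c_mem_Icc {k : ℕ} (hk : k ≤ d) : F.c k ∈ Icc (0 : ℝ) 1 :=
  ⟨F.c0 ▸ F.c_le_c k.zero_le hk, F.cd ▸ F.c_le_c hk le_rfl⟩

lemma left_mem_lap {k : ℕ} (hk : k < d) : F.c k ∈ F.lap k :=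
  ⟨le_rfl, F.c_le_c k.le_succ hk⟩

lemma right_mem_lap {k : ℕ} (hk : k < d) : F.c (k + 1) ∈ F.lap k :=
  ⟨F.c_le_c k.le_succ hk, le_rfl⟩

lemma lap_subset {k : ℕ} (hk : k < d) : F.lap k ⊆ Icc 0 1 :=
  Icc_subset_Icc (F.c_mem_Icc hk.le).1 (F.c_mem_Icc hk).2

lemma lap_zero : F.lap 0 = Icc 0 (F.c 1) := by
  rw [lap, F.c0]

lemma lap_last : F.lap (d - 1) = Icc (F.c (d - 1)) 1 := by
  rw [lap, Nat.sub_add_cancel F.pos, F.cd]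

lemma exists_mem_lap {z : ℝ} (hz : z ∈ Icc (0 : ℝ) 1) : ∃ k < d, z ∈ F.lap k := by
  classical
  have hex : ∃ k, z ≤ F.c (k + 1) := ⟨d - 1, by rw [Nat.sub_add_cancel F.pos, F.cd]; exact hz.2⟩
  refine ⟨Nat.find hex, ?_, ?_, Nat.find_spec hex⟩
  · have := Nat.find_min' hex (show z ≤ F.c (d - 1 + 1) by
      rw [Nat.sub_add_cancel F.pos, F.cd]; exact hz.2)
    have := F.pos
    omega
  · rcases h : Nat.find hex with _ | j
    · exact F.c0 ▸ hz.1
    · exact (not_le.1 (Nat.find_min hex (h ▸ j.lt_succ_self))).le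

lemma mapsTo_of_forall_lap {t : Set ℝ} (h : ∀ k < d, MapsTo F.f (F.lap k) t) :
    MapsTo F.f (Icc 0 1) t := fun z hz => by
  obtain ⟨k, hk, hzk⟩ := F.exists_mem_lap hz
  exact h k hk hzk

lemma apply_mem_uIcc {k : ℕ} (hk : k < d) {u z v : ℝ} (hu : u ∈ F.lap k) (hv : v ∈ F.lap k)
    (huz : u ≤ z) (hzv : z ≤ v) : F.f z ∈ uIcc (F.f u) (F.f v) := by
  have hz : z ∈ F.lap k := ⟨hu.1.trans huz, hzv.trans hv.2⟩
  rcases F.piece k hk with h | h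
  · exact mem_uIcc_of_le (h.monotoneOn hu hz huz) (h.monotoneOn hz hv hzv)
  · exact mem_uIcc_of_ge (h.antitoneOn hz hv hzv) (h.antitoneOn hu hz huz)

section Eigenfunction

variable {finv : ℕ → ℝ → ℝ} {φ : ℝ → ℂ} {ξ : ℂ}

lemma transferOpC_eq_zero_of_notMem_image {z : ℝ} (hz : z ∉ F.f '' Icc 0 1) :
    transferOpC F.f d F.c finv φ z = 0 :=
  Finset.sum_eq_zero fun k hk => by
    rw [indicator_of_notMem fun h => hz (image_mono (F.lap_subset (Finset.mem_range.1 hk)) h)]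
    simp

lemma eigenfunction_eq_zero_of_notMem_image (hξ : ξ ≠ 0)
    (heig : ∀ x ∈ Icc (0 : ℝ) 1, transferOpC F.f d F.c finv φ x = ξ * φ x)
    {z : ℝ} (hzI : z ∈ Icc (0 : ℝ) 1) (hz : z ∉ F.f '' Icc 0 1) : φ z = 0 := by
  have h := heig z hzI
  rw [F.transferOpC_eq_zero_of_notMem_image hz] at h
  exact (mul_eq_zero.1 h.symm).resolve_left hξ

/-- By `hlive`, at most one term of `Lφ y` is nonzero for `y ∈ S`, so
`|ξ| |φ y| = |Lφ y| ≤ sup_S |φ|`. -/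
theorem eigenfunction_eqOn_zero
    (hinv' : ∀ k < d, ∀ y ∈ F.f '' F.lap k, finv k y ∈ F.lap k ∧ F.f (finv k y) = y)
    {C : ℝ} (hbdd : ∀ x ∈ Icc (0 : ℝ) 1, ‖φ x‖ ≤ C) (hξ : 1 < ‖ξ‖)
    (heig : ∀ x ∈ Icc (0 : ℝ) 1, transferOpC F.f d F.c finv φ x = ξ * φ x)
    {S : Set ℝ} (hSI : S ⊆ Icc 0 1) (hback : ∀ k < d, ∀ z ∈ F.lap k, F.f z ∈ S → z ∈ S)
    (hlive : ∀ k < d, ∀ k' < d, ∀ z ∈ F.lap k, ∀ z' ∈ F.lap k', F.f z ∈ S →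
      F.f z = F.f z' → z ∈ F.f '' Icc 0 1 → z' ∈ F.f '' Icc 0 1 → k = k') :
    ∀ y ∈ S, φ y = 0 := by
  have hξ0 : ξ ≠ 0 := norm_pos_iff.1 (one_pos.trans hξ)
  refine eqOn_zero_of_bound_improves hξ (fun y hy => hbdd y (hSI hy)) fun M hM y hy => ?_
  rw [← norm_mul, ← heig y (hSI hy)]
  have hterm : ∀ k < d, y ∈ F.f '' F.lap k →
      φ (finv k y) * ((F.f '' F.lap k).indicator (fun _ => (1 : ℝ)) y : ℝ) = φ (finv k y) :=
    fun k _ h => by simp [indicator_of_mem h]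
  have hlive_of_ne : ∀ k ∈ Finset.range d,
      φ (finv k y) * ((F.f '' F.lap k).indicator (fun _ => (1 : ℝ)) y : ℝ) ≠ 0 →
      finv k y ∈ F.lap k ∧ F.f (finv k y) = y ∧ finv k y ∈ F.f '' Icc 0 1 := by
    intro k hk hne
    have hk := Finset.mem_range.1 hk
    have hy : y ∈ F.f '' F.lap k := by
      by_contra h
      simp [indicator_of_notMem h] at hne
    obtain ⟨hzk, hfz⟩ := hinv' k hk y hy
    refine ⟨hzk, hfz, by_contra fun hdead => ?_⟩
    rw [hterm k hk hy] at hne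
    exact hne (F.eigenfunction_eq_zero_of_notMem_image hξ0 heig (F.lap_subset hk hzk) hdead)
  refine norm_sum_le_of_ne_zero_unique ((norm_nonneg _).trans (hM y hy)) (fun k hk => ?_)
    fun k hk k' hk' hne hne' => ?_
  · by_cases hyk : y ∈ F.f '' F.lap k
    · have hk := Finset.mem_range.1 hk
      obtain ⟨hzk, hfz⟩ := hinv' k hk y hyk
      rw [hterm k hk hyk]
      exact hM _ (hback k hk _ hzk (by rwa [hfz]))
    · simpa [indicator_of_notMem hyk] using (norm_nonneg _).trans (hM y hy)
  · obtain ⟨hz, hfz, hzl⟩ := hlive_of_ne k hk hne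
    obtain ⟨hz', hfz', hzl'⟩ := hlive_of_ne k' hk' hne'
    exact hlive k (Finset.mem_range.1 hk) k' (Finset.mem_range.1 hk') _ hz _ hz'
      (by rwa [hfz]) (hfz.trans hfz'.symm) hzl hzl'

end Eigenfunction

/-- The properties of the core `K_f = [a, b]` that the argument uses
(see `core_isCriticalInterval`). -/
structure IsCriticalInterval (a b : ℝ) : Prop where
  nonneg : 0 ≤ a
  le_one : b ≤ 1
  map_left : F.f a ∈ Icc a b
  map_right : F.f b ∈ Icc a b
  map_turning : ∀ i, 0 < i → i < d → F.f (F.c i) ∈ Icc a b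

namespace IsCriticalInterval

variable {F} {a b : ℝ}

lemma map_c_of_mem (h : F.IsCriticalInterval a b) {k : ℕ} (hk : k ≤ d)
    (hck : F.c k ∈ Icc a b) : F.f (F.c k) ∈ Icc a b := by
  rcases Nat.eq_zero_or_pos k with rfl | hk0
  · rw [le_antisymm (F.c0 ▸ h.nonneg) hck.1]
    exact h.map_left
  rcases hk.lt_or_eq with hkd | rfl
  · exact h.map_turning k hk0 hkd
  · rw [le_antisymm hck.2 (F.cd ▸ h.le_one)]
    exact h.map_right

lemma mapsTo (h : F.IsCriticalInterval a b) : MapsTo F.f (Icc a b) (Icc a b) := by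
  intro z hz
  obtain ⟨k, hk, hzk⟩ := F.exists_mem_lap ⟨h.nonneg.trans hz.1, hz.2.trans h.le_one⟩
  have hu : F.f (max a (F.c k)) ∈ Icc a b := by
    rcases le_total a (F.c k) with hac | hca
    · rw [max_eq_right hac]
      exact h.map_c_of_mem hk.le ⟨hac, hzk.1.trans hz.2⟩
    · rw [max_eq_left hca]
      exact h.map_left
  have hv : F.f (min b (F.c (k + 1))) ∈ Icc a b := by
    rcases le_total b (F.c (k + 1)) with hbc | hcb
    · rw [min_eq_left hbc]
      exact h.map_right
    · rw [min_eq_right hcb]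
      exact h.map_c_of_mem hk ⟨hz.1.trans hzk.2, hcb⟩
  have hck := (F.left_mem_lap hk).2
  exact uIcc_subset_Icc hu hv <| F.apply_mem_uIcc hk
    ⟨le_max_right _ _, max_le (hz.1.trans hzk.2) hck⟩
    ⟨le_min (hzk.1.trans hz.2) hck, min_le_right _ _⟩
    (max_le hz.1 hzk.1) (le_min hz.2 hzk.2)

lemma mapsTo_lap_of_interior (h : F.IsCriticalInterval a b) {k : ℕ} (hk0 : 0 < k)
    (hkd : k + 1 < d) : MapsTo F.f (F.lap k) (Icc a b) := fun _ hz =>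
  uIcc_subset_Icc (h.map_turning k hk0 (by omega)) (h.map_turning (k + 1) k.succ_pos hkd) <|
    F.apply_mem_uIcc (by omega) (F.left_mem_lap (by omega)) (F.right_mem_lap (by omega)) hz.1 hz.2

lemma mapsTo_of_end_laps (h : F.IsCriticalInterval a b) {t : Set ℝ} (hab : Icc a b ⊆ t)
    (h0 : MapsTo F.f (F.lap 0) t) (h1 : MapsTo F.f (F.lap (d - 1)) t) :
    MapsTo F.f (Icc 0 1) t :=
  F.mapsTo_of_forall_lap fun k hk => by
    rcases Nat.eq_zero_or_pos k with rfl | hk0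
    · exact h0
    rcases (Nat.le_sub_one_of_lt hk).lt_or_eq with hkd | rfl
    · exact (h.mapsTo_lap_of_interior hk0 (by omega)).mono_right hab
    · exact h1

/-- If, say, `f` increases on the first lap and decreases on the last, then `f(I) ≤ b`, so the
common image lies below `a`, which forces the point of the last lap above `b`, out of `f(I)`.
Laps of the same monotonicity have images meeting only inside `[a, b]`. -/
lemma false_of_live_preimages_end_laps (h : F.IsCriticalInterval a b) (hd : 2 ≤ d)
    {z z' : ℝ} (hz : z ∈ F.lap 0) (hz' : z' ∈ F.lap (d - 1)) (hy : F.f z ∉ Icc a b)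
    (hzz' : F.f z = F.f z') (hzl : z ∈ F.f '' Icc 0 1) (hzl' : z' ∈ F.f '' Icc 0 1) :
    False := by
  have hc1 := h.map_turning 1 one_pos (by omega)
  have hc := h.map_turning (d - 1) (by omega) (by omega)
  have h1mem : F.c 1 ∈ F.lap 0 := F.right_mem_lap F.pos
  have hdmem : F.c (d - 1) ∈ F.lap (d - 1) := F.left_mem_lap (by omega)
  have hzI : z ∈ Icc (0 : ℝ) 1 := F.lap_subset F.pos hz
  have hout : ∀ {w}, w ∈ F.f '' Icc 0 1 → F.f w ∉ Icc a b → w ∉ Icc a b :=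
    fun _ hw hmem => hw (h.mapsTo hmem)
  rcases F.piece 0 F.pos with m0 | a0 <;> rcases F.piece (d - 1) (by omega) with m1 | a1
  · exact hy ⟨hzz' ▸ hc.1.trans (m1.monotoneOn hdmem hz' hz'.1),
      (m0.monotoneOn hz h1mem hz.2).trans hc1.2⟩
  · have hI : MapsTo F.f (Icc 0 1) (Iic b) := h.mapsTo_of_end_laps (fun _ hw => hw.2)
      (fun _ hw => (m0.monotoneOn hw h1mem hw.2).trans hc1.2)
      (fun _ hw => (a1.antitoneOn hdmem hw hw.1).trans hc.2)
    have hya : F.f z < a := lt_of_not_ge fun hay => hy ⟨hay, hI hzI⟩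
    obtain ⟨w, hw, hwz'⟩ := hzl'
    have hz'a : z' < a := lt_of_not_ge fun haz' =>
      hout ⟨w, hw, hwz'⟩ (hzz' ▸ hy) ⟨haz', hwz' ▸ hI hw⟩
    have ha : a ∈ F.lap (d - 1) := by
      rw [F.lap_last]
      exact ⟨hz'.1.trans hz'a.le, (h.map_left.1.trans h.map_left.2).trans h.le_one⟩
    have := a1.antitoneOn hz' ha hz'a.le
    linarith [h.map_left.1]
  · have hI : MapsTo F.f (Icc 0 1) (Ici a) := h.mapsTo_of_end_laps (fun _ hw => hw.1)
      (fun _ hw => hc1.1.trans (a0.antitoneOn hw h1mem hw.2))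
      (fun _ hw => hc.1.trans (m1.monotoneOn hdmem hw hw.1))
    have hby : b < F.f z := lt_of_not_ge fun hyb => hy ⟨hI hzI, hyb⟩
    obtain ⟨w, hw, hwz⟩ := hzl
    have hbz : b < z := lt_of_not_ge fun hzb =>
      hout ⟨w, hw, hwz⟩ hy ⟨hwz ▸ hI hw, hzb⟩
    have hb : b ∈ F.lap 0 := by
      rw [F.lap_zero]
      exact ⟨h.nonneg.trans (h.map_right.1.trans h.map_right.2), hbz.le.trans hz.2⟩
    have := a0.antitoneOn hb hz hbz.le
    linarith [h.map_right.2]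
  · exact hy ⟨hc1.1.trans (a0.antitoneOn hz h1mem hz.2),
      hzz' ▸ (a1.antitoneOn hdmem hz' hz'.1).trans hc.2⟩

lemma eq_of_live_preimages (h : F.IsCriticalInterval a b) (hd : 2 ≤ d) {k k' : ℕ} (hk : k < d)
    (hk' : k' < d) {z z' : ℝ} (hz : z ∈ F.lap k) (hz' : z' ∈ F.lap k') (hy : F.f z ∉ Icc a b)
    (hzz' : F.f z = F.f z') (hzl : z ∈ F.f '' Icc 0 1) (hzl' : z' ∈ F.f '' Icc 0 1) :
    k = k' := by
  have hend : ∀ {j w}, j < d → w ∈ F.lap j → F.f w ∉ Icc a b → j = 0 ∨ j = d - 1 :=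
    fun hj hw hfw => by
      by_contra hne
      push Not at hne
      exact hfw (h.mapsTo_lap_of_interior (by omega) (by omega) hw)
  rcases hend hk hz hy with rfl | rfl <;> rcases hend hk' hz' (hzz' ▸ hy) with rfl | rfl
  · rfl
  · exact (h.false_of_live_preimages_end_laps hd hz hz' hy hzz' hzl hzl').elim
  · exact (h.false_of_live_preimages_end_laps hd hz' hz (hzz' ▸ hy) hzz'.symm hzl' hzl).elim
  · rfl

end IsCriticalInterval

lemma iterate_c_mem_postcritical {i n : ℕ} (hi : i ∈ Ioo 0 d) (hn : 1 ≤ n) :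
    F.f^[n] (F.c i) ∈ postcritical d F :=
  subset_closure (mem_biUnion hi (mem_biUnion (mem_Ici.2 hn) rfl))

lemma postcritical_subset : postcritical d F ⊆ Icc 0 1 :=
  closure_minimal (iUnion₂_subset fun _ hi => iUnion₂_subset fun n _ =>
    singleton_subset_iff.2 (F.maps.iterate n (F.c_mem_Icc hi.2.le))) isClosed_Icc

lemma mapsTo_postcritical : MapsTo F.f (postcritical d F) (postcritical d F) := by
  refine MapsTo.closure_of_continuousOn ?_ (F.cont.mono F.postcritical_subset)
  simp only [MapsTo, mem_iUnion, mem_singleton_iff]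
  rintro _ ⟨i, hi, n, hn, rfl⟩
  exact ⟨i, hi, n + 1, mem_Ici.2 (by omega), (Function.iterate_succ_apply' F.f n (F.c i)).symm⟩

theorem core_isCriticalInterval (hd : 2 ≤ d) :
    F.IsCriticalInterval (sInf (postcritical d F)) (sSup (postcritical d F)) := by
  set P := postcritical d F
  have hne : P.Nonempty := ⟨_, F.iterate_c_mem_postcritical (i := 1) ⟨one_pos, hd⟩ le_rfl⟩
  have hbelow : BddBelow P := ⟨0, fun _ hp => (F.postcritical_subset hp).1⟩
  have habove : BddAbove P := ⟨1, fun _ hp => (F.postcritical_subset hp).2⟩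
  have hclosed : IsClosed P := isClosed_closure
  have hPK := subset_Icc_csInf_csSup hbelow habove
  have ha := hclosed.csInf_mem hne hbelow
  have hb := hclosed.csSup_mem hne habove
  exact ⟨(F.postcritical_subset ha).1, (F.postcritical_subset hb).2,
    hPK (F.mapsTo_postcritical ha), hPK (F.mapsTo_postcritical hb),
    fun i hi0 hid => hPK (F.iterate_c_mem_postcritical (n := 1) ⟨hi0, hid⟩ le_rfl)⟩

end PwMono

theorem stmt_11_general (d : ℕ) (F : PwMono d) (finv : ℕ → ℝ → ℝ)
    (hinv' : ∀ k < d, ∀ y ∈ F.f '' Set.Icc (F.c k) (F.c (k + 1)),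
      finv k y ∈ Set.Icc (F.c k) (F.c (k + 1)) ∧ F.f (finv k y) = y)
    (φ : ℝ → ℂ) (C : ℝ) (hbdd : ∀ x ∈ Set.Icc (0 : ℝ) 1, ‖φ x‖ ≤ C)
    (ξ : ℂ) (hξ : 1 < ‖ξ‖)
    (heig : ∀ x ∈ Set.Icc (0 : ℝ) 1, transferOpC F.f d F.c finv φ x = ξ * φ x) :
    ∀ x ∈ Set.Icc (0 : ℝ) 1 \ core d F, φ x = 0 := by
  obtain rfl | hd : d = 1 ∨ 2 ≤ d := by have := F.pos; omega
  · intro x hx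
    exact F.eigenfunction_eqOn_zero hinv' hbdd hξ heig subset_rfl
      (fun k hk _ hz _ => F.lap_subset hk hz) (fun k hk k' hk' _ _ _ _ _ _ _ _ => by omega) x hx.1
  · have hK := F.core_isCriticalInterval hd
    exact F.eigenfunction_eqOn_zero hinv' hbdd hξ heig sdiff_subset
      (fun k hk _ hz hfz => ⟨F.lap_subset hk hz, fun hzK => hfz.2 (hK.mapsTo hzK)⟩)
      fun k hk k' hk' _ hz _ hz' hy => hK.eq_of_live_preimages hd hk hk' hz hz' hy.2

/-- any bounded eigenvector of the transfer operator with eigenvalue of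
modulus `> 1` vanishes on `I ∖ K_f`. -/
theorem stmt_11 (d : ℕ) (F : PwMono d) (finv : ℕ → ℝ → ℝ)
    (hinv : ∀ k < d, ∀ x ∈ Set.Icc (F.c k) (F.c (k + 1)), finv k (F.f x) = x)
    (hinv' : ∀ k < d, ∀ y ∈ F.f '' Set.Icc (F.c k) (F.c (k + 1)),
      finv k y ∈ Set.Icc (F.c k) (F.c (k + 1)) ∧ F.f (finv k y) = y)
    (φ : ℝ → ℂ) (C : ℝ) (hbdd : ∀ x ∈ Set.Icc (0 : ℝ) 1, ‖φ x‖ ≤ C)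
    (ξ : ℂ) (hξ : 1 < ‖ξ‖)
    (heig : ∀ x ∈ Set.Icc (0 : ℝ) 1, transferOpC F.f d F.c finv φ x = ξ * φ x) :
    ∀ x ∈ Set.Icc (0 : ℝ) 1 \ core d F, φ x = 0 :=
  stmt_11_general d F finv hinv' φ C hbdd ξ hξ heig
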